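/- arXiv:1704.01195 — 2 statements merged into one kernel-verified Lean document; each statement's English description precedes it below -/
import Mathlib

section
/- Let α > 0, and suppose D > G > 0. Then the equilibrium effort e* = ln(2αD)/(2α) strictly exceeds the socially optimal effort ê = ln(2αG)/(2α), and consequently G·exp(-2αê) + ê < G·exp(-2αe*) + e*. -/
open Real

/-- Substituting `t = k e - log (k c)` turns `c * exp (-(k e)) + e` into
`(exp (-t) + t + log (k c)) / k`, and `exp (-t) + t > 1` for `t ≠ 0`. -/
theorem mul_exp_neg_mul_add_lt {k c e : ℝ} (hk : 0 < k) (hc : 0 < c)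
    (he : e ≠ log (k * c) / k) :
    c * exp (-(k * (log (k * c) / k))) + log (k * c) / k < c * exp (-(k * e)) + e := by
  have hkc : 0 < k * c := mul_pos hk hc
  have shift (x : ℝ) : c * exp (-(k * x)) + x =
      (exp (-(k * x - log (k * c))) + (k * x - log (k * c)) + log (k * c)) / k := by
    rw [neg_sub, exp_sub, exp_log hkc, exp_neg]
    field_simp
    ring
  have ht : k * e - log (k * c) ≠ 0 := by
    contrapose! he
    field_simp
    linarith
  rw [shift, shift, mul_div_cancel₀ _ hk.ne', sub_self, neg_zero, exp_zero]
  refine div_lt_div_of_pos_right ?_ hk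
  linarith [add_one_lt_exp (neg_ne_zero.mpr ht)]

/-- If `D > G > 0` then equilibrium effort `e* = ln(2αD)/(2α)` strictly exceeds the
socially optimal effort `ê = ln(2αG)/(2α)`, and the social loss is strictly larger
at `e*` than at `ê`. -/
theorem stmt_6 (α D G : ℝ) (hα : 0 < α) (hG : 0 < G) (hDG : G < D) :
    Real.log (2 * α * G) / (2 * α) < Real.log (2 * α * D) / (2 * α) ∧
    G * Real.exp (-2 * α * (Real.log (2 * α * G) / (2 * α))) +
        Real.log (2 * α * G) / (2 * α) <
      G * Real.exp (-2 * α * (Real.log (2 * α * D) / (2 * α))) +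
        Real.log (2 * α * D) / (2 * α) := by
  have hα2 : 0 < 2 * α := by positivity
  have effort_lt : log (2 * α * G) / (2 * α) < log (2 * α * D) / (2 * α) :=
    div_lt_div_of_pos_right (log_lt_log (by positivity) (by gcongr)) hα2
  refine ⟨effort_lt, ?_⟩
  simpa only [neg_mul] using mul_exp_neg_mul_add_lt hα2 hG effort_lt.ne'
end

section
/- In the symmetric two-source example with x₂ = 1, equilibrium total slopes D_i = 2d_i (two identical buyers), social weights G_i = 2γ_i and α = 1, the price of anarchy PoA(x₁) = (Σ_{i=1,2} [G_i/(2D_i) + ln(2D_i)/2]) / (Σ_{i=1,2} [1/2 + ln(2G_i)/2]) equals 1 when x₁ = -1 (since then D_i = G_i) and is strictly greater than 1 for x₁ ∈ (-1, 1). -/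
open Set

noncomputable def xi1 (x₁ : ℝ) : ℝ := (x₁ + 1) ^ 2 / 4
noncomputable def xi2 (x₁ : ℝ) : ℝ := (x₁ + 1) ^ 2 / (x₁ ^ 2 + 1) ^ 2

noncomputable def gam (x₁ x₂ xi : ℝ) : ℝ :=
  ((x₁ - x₂) ^ 2 / 3 + (xi ^ 2 - x₁ * x₂) ^ 2) / (x₁ ^ 2 + x₂ ^ 2 - 2 * x₁ * x₂) ^ 2

/-- Price of anarchy (with `α = 1`) given total equilibrium slopes `D₁, D₂` and total
social weights `G₁, G₂`: social loss at equilibrium effort `eᵢ* = ln(2Dᵢ)/2` over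
social loss at the optimal effort `êᵢ = ln(2Gᵢ)/2`. -/
noncomputable def PoA (D₁ D₂ G₁ G₂ : ℝ) : ℝ :=
  (G₁ / (2 * D₁) + Real.log (2 * D₁) / 2 + (G₂ / (2 * D₂) + Real.log (2 * D₂) / 2)) /
    (1 / 2 + Real.log (2 * G₁) / 2 + (1 / 2 + Real.log (2 * G₂) / 2))

lemma key_ineq {G D : ℝ} (hG : 0 < G) (h : G < D) :
    1 / 2 + Real.log (2 * G) / 2 < G / (2 * D) + Real.log (2 * D) / 2 := by
  have hD : 0 < D := hG.trans h
  have hlt : G / D < 1 := (div_lt_one hD).2 h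
  have h1 : Real.log (G / D) < G / D - 1 :=
    Real.log_lt_sub_one_of_pos (by positivity) hlt.ne
  rw [Real.log_div hG.ne' hD.ne'] at h1
  rw [Real.log_mul two_ne_zero hG.ne', Real.log_mul two_ne_zero hD.ne']
  have ht : G / (2 * D) = (G / D) / 2 := by ring
  rw [ht]
  linarith

set_option maxHeartbeats 1000000 in
/-- In the symmetric two-source example with `x₂ = 1`, two identical buyers, per-buyer
slopes solving `d₁ = γ₁ + ξ₂₁d₂`, `d₂ = γ₂ + ξ₁₂d₁`, totals `Dᵢ = 2dᵢ`, `Gᵢ = 2γᵢ`: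
the price of anarchy equals `1` at `x₁ = -1` and is strictly greater than `1` for
`x₁ ∈ (-1,1)`. -/
theorem stmt_19 :
    (∀ d₁ d₂ : ℝ,
      d₁ = gam (-1) 1 (-1) + xi2 (-1) * d₂ → d₂ = gam (-1) 1 1 + xi1 (-1) * d₁ →
      PoA (2 * d₁) (2 * d₂) (2 * gam (-1) 1 (-1)) (2 * gam (-1) 1 1) = 1) ∧
    (∀ x₁ : ℝ, x₁ ∈ Ioo (-1 : ℝ) 1 → ∀ d₁ d₂ : ℝ,
      d₁ = gam x₁ 1 x₁ + xi2 x₁ * d₂ → d₂ = gam x₁ 1 1 + xi1 x₁ * d₁ →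
      1 < PoA (2 * d₁) (2 * d₂) (2 * gam x₁ 1 x₁) (2 * gam x₁ 1 1)) := by
  constructor
  · intro d₁ d₂ h1 h2
    have hg1 : gam (-1) 1 (-1) = 1 / 3 := by norm_num [gam]
    have hg2 : gam (-1) 1 1 = 1 / 3 := by norm_num [gam]
    have hx2 : xi2 (-1) = 0 := by norm_num [xi2]
    have hx1 : xi1 (-1) = 0 := by norm_num [xi1]
    rw [hg1, hx2] at h1
    rw [hg2, hx1] at h2
    rw [h1, h2, hg1, hg2, PoA]
    have hlog : 0 ≤ Real.log (2 * (2 * (1 / 3 : ℝ))) := Real.log_nonneg (by norm_num)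
    rw [div_eq_one_iff_eq (by linarith)]
    norm_num
  · rintro x ⟨hxm, hxp⟩ d₁ d₂ h1 h2
    have hne : x - 1 ≠ 0 := by intro hc; nlinarith
    have hsq : 0 < (x - 1) ^ 2 := by positivity
    set γ₁ := gam x 1 x with hγ₁def
    set γ₂ := gam x 1 1 with hγ₂def
    set ξ₁ := xi1 x with hξ₁def
    set ξ₂ := xi2 x with hξ₂def
    have hγ₁ : γ₁ = (1 / 3 + x ^ 2) / (x - 1) ^ 2 := by
      rw [hγ₁def, gam, show x ^ 2 + 1 ^ 2 - 2 * x * 1 = (x - 1) ^ 2 by ring]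
      rw [div_eq_div_iff (by positivity) hsq.ne']; ring
    have hγ₂ : γ₂ = (4 / 3) / (x - 1) ^ 2 := by
      rw [hγ₂def, gam, show x ^ 2 + 1 ^ 2 - 2 * x * 1 = (x - 1) ^ 2 by ring]
      rw [div_eq_div_iff (by positivity) hsq.ne']; ring
    have hγ₁pos : 0 < γ₁ := by rw [hγ₁]; positivity
    have hγ₂pos : 0 < γ₂ := by rw [hγ₂]; positivity
    have hξ₁pos : 0 < ξ₁ := by
      rw [hξ₁def, xi1]
      have : x + 1 ≠ 0 := by intro hc; nlinarith
      positivity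
    have hξ₂pos : 0 < ξ₂ := by
      rw [hξ₂def, xi2]
      have h1' : x + 1 ≠ 0 := by intro hc; nlinarith
      have h2' : (x ^ 2 + 1) ≠ 0 := by positivity
      positivity
    have hprod : ξ₁ * ξ₂ < 1 := by
      rw [hξ₁def, hξ₂def, xi1, xi2]
      rw [div_mul_div_comm, div_lt_one (by positivity)]
      nlinarith [sq_nonneg (x - 1), sq_nonneg ((x + 1) * (x - 1)), sq_nonneg (x ^ 2 - 1)]
    have heq : d₁ * (1 - ξ₁ * ξ₂) = γ₁ + ξ₂ * γ₂ := by
      linear_combination h1 + ξ₂ * h2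
    have hd₁ : 0 < d₁ := by
      nlinarith [mul_pos hξ₂pos hγ₂pos]
    have hd₂ : 0 < d₂ := by nlinarith [mul_pos hξ₁pos hd₁]
    have hD1 : γ₁ < d₁ := by nlinarith [mul_pos hξ₂pos hd₂]
    have hD2 : γ₂ < d₂ := by nlinarith [mul_pos hξ₁pos hd₁]
    have k1 := key_ineq (G := 2 * γ₁) (D := 2 * d₁) (by linarith) (by linarith)
    have k2 := key_ineq (G := 2 * γ₂) (D := 2 * d₂) (by linarith) (by linarith)
    have hl1 : 0 ≤ Real.log (2 * (2 * γ₁)) := by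
      apply Real.log_nonneg
      rw [hγ₁, show 2 * (2 * ((1 / 3 + x ^ 2) / (x - 1) ^ 2)) =
        (4 * (1 / 3 + x ^ 2)) / (x - 1) ^ 2 by ring, le_div_iff₀ hsq]
      nlinarith [sq_nonneg (x + 1 / 3)]
    have hl2 : 0 ≤ Real.log (2 * (2 * γ₂)) := by
      apply Real.log_nonneg
      rw [hγ₂, show 2 * (2 * (4 / 3 / (x - 1) ^ 2)) = (16 / 3) / (x - 1) ^ 2 by ring,
        le_div_iff₀ hsq]
      nlinarith [mul_nonneg (by linarith : (0:ℝ) ≤ 1 - x) (by linarith : (0:ℝ) ≤ x + 1)]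
    rw [PoA, lt_div_iff₀ (by linarith)]
    linarith
end
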